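/- Among all orthogonal projections onto k-dimensional subspaces of ℝ^N, the projection onto the span of the first k left singular vectors of the snapshot matrix U minimizes the total squared projection error Σ_{j=1}^M ‖u^j − P u^j‖₂², i.e., for any matrix Q ∈ ℝ^{N×k} with QᵀQ = I_k, Σ_{j=1}^M ‖u^j − QQᵀ u^j‖₂² ≥ Σ_{i=k+1}^{min(N,M)} σ_i². -/

import Mathlib

/-!
Since `QᵀQ = 1`, the residual satisfies `‖U - QQᵀU‖² = ‖U‖² - ‖QᵀU‖²` (Frobenius norms).
By orthogonal invariance, `‖U‖² = ∑ σᵢ²` and `‖QᵀU‖² = ∑ cᵢ σᵢ²`, where the `cᵢ` are the diagonal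
entries of the orthogonal projection `BᵀB`, `B = QᵀV`; hence `0 ≤ cᵢ ≤ 1` and `∑ cᵢ = k`.
For such weights and decreasing `σᵢ²`, `∑ cᵢ σᵢ² ≤ ∑_{i<k} σᵢ²`.
-/

open Matrix Finset

section Frobenius

variable {R : Type*} [CommSemiring R] {m n p : Type*} [Fintype m] [Fintype n] [Fintype p]

theorem sum_sq_eq_trace_transpose_mul_self (X : Matrix m n R) :
    ∑ j, ∑ i, X i j ^ 2 = trace (Xᵀ * X) := by
  simp [trace, mul_apply, sq]

theorem trace_transpose_mul_self_orthogonal_mul [DecidableEq m] {B : Matrix p m R}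
    (hB : Bᵀ * B = 1) (X : Matrix m n R) : trace ((B * X)ᵀ * (B * X)) = trace (Xᵀ * X) := by
  rw [transpose_mul, Matrix.mul_assoc, ← Matrix.mul_assoc Bᵀ, hB, Matrix.one_mul]

theorem trace_transpose_mul_self_mul_orthogonal [DecidableEq n] {C : Matrix n p R}
    (hC : C * Cᵀ = 1) (X : Matrix m n R) : trace ((X * C)ᵀ * (X * C)) = trace (Xᵀ * X) := by
  rw [transpose_mul, Matrix.mul_assoc, trace_mul_comm, Matrix.mul_assoc, Matrix.mul_assoc, hC,
    Matrix.mul_one]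

theorem trace_transpose_mul_self_mul (X : Matrix m n R) (Y : Matrix n p R) :
    trace ((X * Y)ᵀ * (X * Y)) = trace (Xᵀ * X * (Y * Yᵀ)) := by
  rw [transpose_mul, Matrix.mul_assoc, trace_mul_comm, ← Matrix.mul_assoc, ← Matrix.mul_assoc,
    Matrix.mul_assoc]

theorem trace_mul_diagonal [DecidableEq n] (X : Matrix n n R) (d : n → R) :
    trace (X * diagonal d) = ∑ i, X i i * d i := by
  simp [trace, mul_diagonal]

end Frobenius

theorem transpose_mul_self_sub_proj_mul {R : Type*} [CommRing R] {m n p : Type*} [Fintype m]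
    [Fintype p] [DecidableEq p] {Q : Matrix m p R} (hQ : Qᵀ * Q = 1) (U : Matrix m n R) :
    (U - Q * Qᵀ * U)ᵀ * (U - Q * Qᵀ * U) = Uᵀ * U - (Qᵀ * U)ᵀ * (Qᵀ * U) := by
  have hproj : Qᵀ * (Q * (Qᵀ * U)) = Qᵀ * U := by rw [← Matrix.mul_assoc, hQ, Matrix.one_mul]
  simp only [transpose_sub, transpose_mul, transpose_transpose, Matrix.sub_mul, Matrix.mul_sub,
    Matrix.mul_assoc, hproj]
  abel

section Orthonormal

variable {n p : Type*} [Fintype n] [Fintype p] {B : Matrix p n ℝ}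

theorem diag_transpose_mul_self_nonneg (B : Matrix p n ℝ) (i : n) : 0 ≤ (Bᵀ * B) i i :=
  (posSemidef_conjTranspose_mul_self B).diag_nonneg

theorem diag_transpose_mul_self_le_one [DecidableEq p] (hB : B * Bᵀ = 1) (i : n) :
    (Bᵀ * B) i i ≤ 1 := by
  have hidem : (Bᵀ * B) * (Bᵀ * B) = Bᵀ * B := by
    rw [Matrix.mul_assoc, ← Matrix.mul_assoc B, hB, Matrix.one_mul]
  have hsymm : ∀ j, (Bᵀ * B) j i = (Bᵀ * B) i j := fun j => by
    simp only [mul_apply, transpose_apply, mul_comm]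
  have hsq : (Bᵀ * B) i i ^ 2 ≤ (Bᵀ * B) i i :=
    calc (Bᵀ * B) i i ^ 2 ≤ ∑ j, (Bᵀ * B) i j ^ 2 :=
          single_le_sum (f := fun j => (Bᵀ * B) i j ^ 2) (fun _ _ => sq_nonneg _) (mem_univ i)
      _ = (Bᵀ * B) i i := by
          conv_rhs => rw [← hidem, mul_apply]
          simp only [hsymm, sq]
  nlinarith [diag_transpose_mul_self_nonneg B i]

theorem trace_transpose_mul_self_of_mul_transpose_eq_one [DecidableEq p] (hB : B * Bᵀ = 1) :
    trace (Bᵀ * B) = Fintype.card p := by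
  rw [trace_mul_comm, hB, trace_one]

end Orthonormal

theorem mul_transpose_eq_diagonal_of_apply_eq_ite {R : Type*} [CommSemiring R] {n m : ℕ}
    {σ : ℕ → R} {S : Matrix (Fin n) (Fin m) R}
    (hS : ∀ i j, S i j = if (i : ℕ) = (j : ℕ) then σ i else 0) :
    S * Sᵀ = diagonal fun i : Fin n => if (i : ℕ) < m then σ i ^ 2 else 0 := by
  ext i i'
  simp only [mul_apply, transpose_apply, hS, ite_mul, zero_mul]
  rw [Fin.sum_univ_eq_sum_range
    (fun j => if (i : ℕ) = j then σ i * (if (i' : ℕ) = j then σ i' else 0) else 0), sum_ite_eq]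
  by_cases h : i = i'
  · subst h
    simp [sq]
  · have h' : (i' : ℕ) ≠ i := fun h' => h (Fin.ext h'.symm)
    simp [h, h']

theorem sum_range_ite_lt {M : Type*} [AddCommMonoid M] (n k : ℕ) (f : ℕ → M) :
    ∑ i ∈ range n, (if i < k then f i else 0) = ∑ i ∈ range (min n k), f i := by
  rw [← sum_filter]
  congr 1
  ext i
  simp only [mem_filter, mem_range]
  omega

theorem sum_mul_le_sum_range_of_antitone {n k : ℕ} (hk : k ≤ n) {c : Fin n → ℝ} {d : ℕ → ℝ}
    (hd : Antitone d) (hc₀ : ∀ i, 0 ≤ c i) (hc₁ : ∀ i, c i ≤ 1) (hc : ∑ i, c i = k) :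
    ∑ i, c i * d i ≤ ∑ i ∈ range k, d i := by
  -- compare with the extreme weights `[i < k]`, paying `d k` per unit of weight moved
  have hterm : ∀ i : Fin n, c i * d i ≤
      (if (i : ℕ) < k then d i else 0) + d k * (c i - if (i : ℕ) < k then 1 else 0) := by
    intro i
    split_ifs with hik
    · nlinarith [hd hik.le, hc₁ i]
    · nlinarith [hd (not_lt.mp hik), hc₀ i]
  have hsum : ∀ f : ℕ → ℝ, ∑ i : Fin n, (if (i : ℕ) < k then f i else 0) = ∑ i ∈ range k, f i :=
    fun f => by
      rw [Fin.sum_univ_eq_sum_range (fun i => if i < k then f i else 0), sum_range_ite_lt,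
        min_eq_right hk]
  calc ∑ i, c i * d i ≤ ∑ i : Fin n, ((if (i : ℕ) < k then d i else 0) +
          d k * (c i - if (i : ℕ) < k then 1 else 0)) := sum_le_sum fun i _ => hterm i
    _ = ∑ i ∈ range k, d i := by
      rw [sum_add_distrib, ← mul_sum, sum_sub_distrib, hsum, hsum (fun _ => 1), hc]
      simp

open Matrix Finset in
/-- POD / Eckart–Young error identity: for `U = V Σ Wᵀ` an SVD, the total squared
error of projecting the columns of `U` onto the first `k` left singular vectors
equals the sum of the squares of the discarded singular values. -/
theorem pod_projection_optimal
    (N M k : ℕ) (hk : k ≤ min N M)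
    (U : Matrix (Fin N) (Fin M) ℝ)
    (V : Matrix (Fin N) (Fin N) ℝ) (W : Matrix (Fin M) (Fin M) ℝ)
    (σ : ℕ → ℝ)
    (S : Matrix (Fin N) (Fin M) ℝ)
    (hS : ∀ i j, S i j = if (i : ℕ) = (j : ℕ) then σ (i : ℕ) else 0)
    (hσ_nonneg : ∀ i, 0 ≤ σ i)
    (hσ_dec : ∀ i j, i ≤ j → σ j ≤ σ i)
    (hV : Vᵀ * V = 1) (hW : Wᵀ * W = 1)
    (hSVD : U = V * S * Wᵀ)
    (Q : Matrix (Fin N) (Fin k) ℝ) (hQ : Qᵀ * Q = 1) :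
    ∑ i ∈ Finset.Ico k (min N M), σ i ^ 2
      ≤ ∑ j : Fin M, ∑ i : Fin N, ((U - Q * Qᵀ * U) i j) ^ 2 := by
  set d : ℕ → ℝ := fun i => if i < M then σ i ^ 2 else 0
  have hd : Antitone d := fun i j hij => by
    by_cases hj : j < M
    · simp only [d, if_pos hj, if_pos (hij.trans_lt hj)]
      exact pow_le_pow_left₀ (hσ_nonneg j) (hσ_dec i j hij) 2
    · simp only [d, if_neg hj]
      split_ifs <;> positivity
  have hSS : S * Sᵀ = diagonal fun i : Fin N => d i := mul_transpose_eq_diagonal_of_apply_eq_ite hS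
  have hWt : Wᵀ * Wᵀᵀ = 1 := by rwa [transpose_transpose]
  set B := Qᵀ * V
  have hB : B * Bᵀ = 1 := by
    rw [transpose_mul, transpose_transpose, Matrix.mul_assoc, ← Matrix.mul_assoc V,
      mul_eq_one_comm.mp hV, Matrix.one_mul, hQ]
  have hU : trace (Uᵀ * U) = ∑ i ∈ range (min N M), σ i ^ 2 := by
    rw [hSVD, trace_transpose_mul_self_mul_orthogonal hWt,
      trace_transpose_mul_self_orthogonal_mul hV, trace_mul_comm, hSS, trace_diagonal,
      Fin.sum_univ_eq_sum_range d, sum_range_ite_lt]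
  have hQU : trace ((Qᵀ * U)ᵀ * (Qᵀ * U)) = ∑ i, (Bᵀ * B) i i * d i := by
    rw [show Qᵀ * U = B * S * Wᵀ by simp only [hSVD, B, Matrix.mul_assoc],
      trace_transpose_mul_self_mul_orthogonal hWt, trace_transpose_mul_self_mul, hSS,
      trace_mul_diagonal]
  have hkey := sum_mul_le_sum_range_of_antitone (hk.trans (min_le_left N M)) hd
    (diag_transpose_mul_self_nonneg B) (diag_transpose_mul_self_le_one hB)
    (by simpa [trace] using trace_transpose_mul_self_of_mul_transpose_eq_one hB)
  have hdk : ∑ i ∈ range k, d i = ∑ i ∈ range k, σ i ^ 2 :=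
    sum_congr rfl fun i hi => if_pos ((mem_range.mp hi).trans_le (hk.trans (min_le_right N M)))
  rw [sum_sq_eq_trace_transpose_mul_self, transpose_mul_self_sub_proj_mul hQ, trace_sub, hU, hQU,
    ← sum_range_add_sum_Ico _ hk]
  linarith
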